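/- For fixed R > 0 and r > R, and for every natural number n, ∫_r^∞ T_n(r/ρ) / √(1 − (r/ρ)²) · ρ^{−k} dρ = 0 whenever k is a positive integer with k ≤ n, n − k even, and k ≥ 2. -/

import Mathlib

/-!
Substituting ρ = r / cos ν maps (0, π/2) onto (r, ∞), turns T_n(r/ρ) into cos(nν) and
√(1 - (r/ρ)²) into sin ν, and the integral becomes r^(1-k) ∫₀^{π/2} cos(nν) cos^(k-2) ν dν.
That integral vanishes when n - (k - 2) is even and at least 2: the product formula
cos(aν) cos ν = (cos((a+1)ν) + cos((a-1)ν)) / 2 lowers the power of cos ν by one while keeping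
the parity, down to ∫₀^{π/2} cos(2jν) dν = 0 with j ≥ 1.
-/

open MeasureTheory Real Set

lemma cos_mul_mul_cos (a x : ℝ) :
    cos (a * x) * cos x = (cos ((a + 1) * x) + cos ((a - 1) * x)) / 2 := by
  rw [add_mul, sub_mul, one_mul, cos_add, cos_sub]
  ring

lemma integral_cos_mul_cos_pow_eq_zero (m j : ℕ) :
    ∫ x in (0 : ℝ)..π / 2, cos ((m + 2 + 2 * j) * x) * cos x ^ m = 0 := by
  induction m generalizing j with
  | zero =>
    have hc : (0 + 2 + 2 * j : ℝ) ≠ 0 := by positivity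
    have hsin : sin ((0 + 2 + 2 * j : ℝ) * (π / 2)) = 0 := by
      rw [show (0 + 2 + 2 * j : ℝ) * (π / 2) = ((j + 1 : ℕ) : ℝ) * π by push_cast; ring]
      exact sin_nat_mul_pi _
    simp only [Nat.cast_zero, pow_zero, mul_one]
    rw [intervalIntegral.integral_comp_mul_left (fun x => cos x) hc, integral_cos, hsin]
    simp
  | succ m ih =>
    have hsplit : ∀ x : ℝ, cos ((↑(m + 1) + 2 + 2 * j) * x) * cos x ^ (m + 1) =
        (cos ((m + 2 + 2 * ↑(j + 1)) * x) * cos x ^ m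
          + cos ((m + 2 + 2 * j) * x) * cos x ^ m) / 2 := by
      intro x
      rw [pow_succ', ← mul_assoc, cos_mul_mul_cos]
      push_cast
      ring_nf
    have hint : ∀ a : ℝ, IntervalIntegrable (fun x => cos (a * x) * cos x ^ m) volume 0 (π / 2) :=
      fun a => (by fun_prop : Continuous fun x => cos (a * x) * cos x ^ m).intervalIntegrable _ _
    simp_rw [hsplit]
    rw [intervalIntegral.integral_div, intervalIntegral.integral_add (hint _) (hint _), ih, ih]
    norm_num

lemma cos_pos_of_mem_Ioo_zero_pi_div_two {ν : ℝ} (hν : ν ∈ Ioo 0 (π / 2)) : 0 < cos ν :=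
  cos_pos_of_mem_Ioo ⟨by linarith [hν.1, pi_pos], hν.2⟩

lemma sin_pos_of_mem_Ioo_zero_pi_div_two {ν : ℝ} (hν : ν ∈ Ioo 0 (π / 2)) : 0 < sin ν :=
  sin_pos_of_pos_of_lt_pi hν.1 (by linarith [hν.2, pi_pos])

lemma hasDerivAt_const_div_cos (r : ℝ) {ν : ℝ} (hν : cos ν ≠ 0) :
    HasDerivAt (fun ν => r / cos ν) (r * sin ν / cos ν ^ 2) ν := by
  refine ((hasDerivAt_const ν r).div (hasDerivAt_cos ν) hν).congr_deriv ?_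
  ring

lemma injOn_const_div_cos {r : ℝ} (hr : r ≠ 0) : InjOn (fun ν => r / cos ν) (Ioo 0 (π / 2)) := by
  intro a ha b hb hab
  have hcos : cos a = cos b := by
    simp only [div_eq_mul_inv] at hab
    rwa [mul_right_inj' hr, inv_inj] at hab
  exact injOn_cos ⟨ha.1.le, by linarith [ha.2, pi_pos]⟩ ⟨hb.1.le, by linarith [hb.2, pi_pos]⟩ hcos

lemma image_const_div_cos_Ioo {r : ℝ} (hr : 0 < r) :
    (fun ν => r / cos ν) '' Ioo 0 (π / 2) = Ioi r := by
  ext ρ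
  constructor
  · rintro ⟨ν, hν, rfl⟩
    have hc := cos_pos_of_mem_Ioo_zero_pi_div_two hν
    have hc1 : cos ν < 1 := by
      rw [← cos_zero]
      exact cos_lt_cos_of_nonneg_of_le_pi le_rfl (by linarith [hν.2, pi_pos]) hν.1
    exact (lt_div_iff₀ hc).2 (by nlinarith)
  · intro hρ
    have hρ0 : 0 < ρ := hr.trans hρ
    have h1 : 0 < r / ρ := div_pos hr hρ0
    have h2 : r / ρ < 1 := (div_lt_one hρ0).2 hρ
    refine ⟨arccos (r / ρ), ⟨arccos_pos.2 h2, arccos_lt_pi_div_two.2 h1⟩, ?_⟩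
    simp only [cos_arccos (by linarith) h2.le]
    field_simp

theorem integral_Ioi_eq_integral_Ioo_const_div_cos {E : Type*} [NormedAddCommGroup E]
    [NormedSpace ℝ E] {r : ℝ} (hr : 0 < r) (g : ℝ → E) :
    ∫ ρ in Ioi r, g ρ = ∫ ν in Ioo 0 (π / 2), (r * sin ν / cos ν ^ 2) • g (r / cos ν) := by
  rw [← image_const_div_cos_Ioo hr, integral_image_eq_integral_abs_deriv_smul measurableSet_Ioo
    (fun ν hν => (hasDerivAt_const_div_cos r
      (cos_pos_of_mem_Ioo_zero_pi_div_two hν).ne').hasDerivWithinAt)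
    (injOn_const_div_cos hr.ne')]
  refine setIntegral_congr_fun measurableSet_Ioo fun ν hν => ?_
  have hcos := cos_pos_of_mem_Ioo_zero_pi_div_two hν
  have hsin := sin_pos_of_mem_Ioo_zero_pi_div_two hν
  rw [abs_of_pos (by positivity)]

lemma chebyshevT_integrand_const_div_cos (n i : ℕ) {r ν : ℝ} (hr : r ≠ 0)
    (hν : ν ∈ Ioo 0 (π / 2)) :
    r * sin ν / cos ν ^ 2 * ((Polynomial.Chebyshev.T ℝ n).eval (r / (r / cos ν)) /
        √(1 - (r / (r / cos ν)) ^ 2) * (r / cos ν) ^ (-((i + 2 : ℕ) : ℤ))) =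
      (r ^ (i + 1))⁻¹ * (cos (n * ν) * cos ν ^ i) := by
  have hcos := cos_pos_of_mem_Ioo_zero_pi_div_two hν
  have hsin := sin_pos_of_mem_Ioo_zero_pi_div_two hν
  have hsqrt : √(1 - cos ν ^ 2) = sin ν :=
    (sin_eq_sqrt_one_sub_cos_sq hν.1.le (by linarith [hν.2, pi_pos])).symm
  have hT : (Polynomial.Chebyshev.T ℝ n).eval (cos ν) = cos (n * ν) := by
    simp [Polynomial.Chebyshev.T_real_cos]
  rw [div_div_cancel₀ hr, hsqrt, hT, zpow_neg, zpow_natCast, div_pow, inv_div]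
  field_simp
  ring

theorem stmt_9 (R r : ℝ) (hR : 0 < R) (hr : R < r) (n k : ℕ)
    (hk2 : 2 ≤ k) (hkn : k ≤ n) (heven : Even (n - k)) :
    ∫ ρ in Set.Ioi r,
        (Polynomial.Chebyshev.T ℝ n).eval (r / ρ) / Real.sqrt (1 - (r / ρ) ^ 2) *
          ρ ^ (-(k : ℤ)) = 0 := by
  have hr0 : 0 < r := hR.trans hr
  obtain ⟨j, hj⟩ := heven
  obtain ⟨i, rfl⟩ : ∃ i, k = i + 2 := ⟨k - 2, by omega⟩
  have hn : (n : ℝ) = i + 2 + 2 * j := by norm_cast; omega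
  simp_rw [integral_Ioi_eq_integral_Ioo_const_div_cos hr0, smul_eq_mul]
  rw [setIntegral_congr_fun measurableSet_Ioo
      fun ν hν => chebyshevT_integrand_const_div_cos n i hr0.ne' hν,
    integral_const_mul, ← integral_Ioc_eq_integral_Ioo,
    ← intervalIntegral.integral_of_le (by positivity), hn,
    integral_cos_mul_cos_pow_eq_zero, mul_zero]
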